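/- arXiv:2406.18934 — 6 statements merged into one kernel-verified Lean document; each statement's English description precedes it below -/
import Mathlib

section
/- Let X be a set with a permutation action of the atoms and let x ∈ X be finitely supported. If the finite sets α and β of atoms both support x, then α ∩ β supports x. Consequently, every finitely supported element x has a least support: a finite set supp(x) that supports x and is contained in every finite set supporting x. -/
/-- Key step: if `α` and `β` support `x` and `a ∈ α \ β`, then `α.erase a` supports `x`. -/
private lemma supp_erase {X : Type*} [MulAction (Equiv.Perm ℕ) X] (x : X)
    (α β : Finset ℕ) (a : ℕ) (haβ : a ∉ β)
    (hα : ∀ π : Equiv.Perm ℕ, (∀ b ∈ α, π b = b) → π • x = x)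
    (hβ : ∀ π : Equiv.Perm ℕ, (∀ b ∈ β, π b = b) → π • x = x) :
    ∀ π : Equiv.Perm ℕ, (∀ b ∈ α.erase a, π b = b) → π • x = x := by
  intro π hπ
  obtain ⟨c, hc⟩ := Infinite.exists_notMem_finset ((α ∪ β) ∪ (α ∪ β).image ⇑π.symm)
  simp only [Finset.mem_union, Finset.mem_image, not_or, not_exists, not_and] at hc
  obtain ⟨⟨hcα, hcβ⟩, hcim⟩ := hc
  have hπcα : π c ∉ α := fun h => hcim (π c) (Or.inl h) (π.symm_apply_apply c)
  have hπcβ : π c ∉ β := fun h => hcim (π c) (Or.inr h) (π.symm_apply_apply c)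
  set τ : Equiv.Perm ℕ := Equiv.swap a c with hτdef
  set τ' : Equiv.Perm ℕ := Equiv.swap (π c) a with hτ'def
  have hτx : τ • x = x := by
    apply hβ
    intro b hb
    exact Equiv.swap_apply_of_ne_of_ne (fun h => haβ (h ▸ hb)) (fun h => hcβ (h ▸ hb))
  have hτ'x : τ' • x = x := by
    apply hβ
    intro b hb
    exact Equiv.swap_apply_of_ne_of_ne (fun h => hπcβ (h ▸ hb)) (fun h => haβ (h ▸ hb))
  have hρ : (τ' * π * τ) • x = x := by
    apply hα
    intro b hb
    by_cases hba : b = a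
    · subst hba
      simp only [Equiv.Perm.mul_apply, hτdef, hτ'def, Equiv.swap_apply_left]
    · have hbc : b ≠ c := fun h => hcα (h ▸ hb)
      have h1 : τ b = b := Equiv.swap_apply_of_ne_of_ne hba hbc
      have h2 : π b = b := hπ b (Finset.mem_erase.mpr ⟨hba, hb⟩)
      have h3 : τ' b = b :=
        Equiv.swap_apply_of_ne_of_ne (fun h => hπcα (h ▸ hb)) hba
      simp only [Equiv.Perm.mul_apply, h1, h2, h3]
  have : τ' • π • x = x := by
    calc τ' • π • x = τ' • π • τ • x := by rw [hτx]
    _ = (τ' * π * τ) • x := by rw [mul_smul, mul_smul]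
    _ = x := hρ
  calc π • x = τ'⁻¹ • τ' • π • x := by rw [inv_smul_smul]
  _ = τ'⁻¹ • x := by rw [this]
  _ = τ' • x := by rw [hτ'def, Equiv.swap_inv]
  _ = x := hτ'x

private lemma supp_inter {X : Type*} [MulAction (Equiv.Perm ℕ) X] (x : X) :
    ∀ (n : ℕ) (α β : Finset ℕ), (α \ β).card = n →
      (∀ π : Equiv.Perm ℕ, (∀ a ∈ α, π a = a) → π • x = x) →
      (∀ π : Equiv.Perm ℕ, (∀ a ∈ β, π a = a) → π • x = x) →
      (∀ π : Equiv.Perm ℕ, (∀ a ∈ α ∩ β, π a = a) → π • x = x) := by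
  intro n
  induction n with
  | zero =>
    intro α β hcard hα hβ π hπ
    have hsub : α ⊆ β := by
      intro a ha
      by_contra h
      exact absurd (Finset.card_eq_zero.mp hcard) (Finset.nonempty_iff_ne_empty.mp
        ⟨a, Finset.mem_sdiff.mpr ⟨ha, h⟩⟩)
    have : α ∩ β = α := Finset.inter_eq_left.mpr hsub
    exact hα π (fun a ha => hπ a (by rw [this]; exact ha))
  | succ n ih =>
    intro α β hcard hα hβ π hπ
    have hne : (α \ β).Nonempty := Finset.card_pos.mp (hcard ▸ n.succ_pos)
    obtain ⟨a, ha⟩ := hne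
    rw [Finset.mem_sdiff] at ha
    have hα' := supp_erase x α β a ha.2 hα hβ
    have hcard' : ((α.erase a) \ β).card = n := by
      have : (α.erase a) \ β = (α \ β).erase a := by
        ext b; simp [Finset.mem_erase, Finset.mem_sdiff, and_assoc, and_left_comm]
      rw [this, Finset.card_erase_of_mem (Finset.mem_sdiff.mpr ha), hcard]
      rfl
    have hint : (α.erase a) ∩ β = α ∩ β := by
      ext b
      simp only [Finset.mem_inter, Finset.mem_erase]
      constructor
      · rintro ⟨⟨_, h1⟩, h2⟩; exact ⟨h1, h2⟩
      · rintro ⟨h1, h2⟩; exact ⟨⟨fun h => ha.2 (h ▸ h2), h1⟩, h2⟩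
    exact ih (α.erase a) β hcard' hα' hβ π (fun b hb => hπ b (by rw [← hint]; exact hb))

/-- If the finite sets `α` and `β` of atoms both support `x`, then `α ∩ β` supports `x`.
Consequently, every finitely supported element has a least support. -/
theorem stmt_4 {X : Type*} [MulAction (Equiv.Perm ℕ) X] (x : X) :
    (∀ α β : Finset ℕ,
      (∀ π : Equiv.Perm ℕ, (∀ a ∈ α, π a = a) → π • x = x) →
      (∀ π : Equiv.Perm ℕ, (∀ a ∈ β, π a = a) → π • x = x) →
      (∀ π : Equiv.Perm ℕ, (∀ a ∈ α ∩ β, π a = a) → π • x = x)) ∧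
    ((∃ α : Finset ℕ, ∀ π : Equiv.Perm ℕ, (∀ a ∈ α, π a = a) → π • x = x) →
      ∃ s : Finset ℕ,
        (∀ π : Equiv.Perm ℕ, (∀ a ∈ s, π a = a) → π • x = x) ∧
        ∀ β : Finset ℕ, (∀ π : Equiv.Perm ℕ, (∀ a ∈ β, π a = a) → π • x = x) → s ⊆ β) := by
  constructor
  · intro α β hα hβ
    exact supp_inter x (α \ β).card α β rfl hα hβ
  · rintro ⟨α, hα⟩
    -- pick a supporting set of minimal cardinality
    have hex : ∃ n : ℕ, ∃ s : Finset ℕ, s.card = n ∧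
        ∀ π : Equiv.Perm ℕ, (∀ a ∈ s, π a = a) → π • x = x := ⟨α.card, α, rfl, hα⟩
    classical
    obtain ⟨s, hscard, hs⟩ := Nat.find_spec hex
    refine ⟨s, hs, fun β hβ => ?_⟩
    have hsupp : ∀ π : Equiv.Perm ℕ, (∀ a ∈ s ∩ β, π a = a) → π • x = x :=
      supp_inter x (s \ β).card s β rfl hs hβ
    have hle : s.card ≤ (s ∩ β).card := by
      rw [hscard]
      exact Nat.find_min' hex ⟨s ∩ β, rfl, hsupp⟩
    have heq : s ∩ β = s := Finset.eq_of_subset_of_card_le Finset.inter_subset_left hle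
    rw [← heq]
    exact Finset.inter_subset_right
end

section
/- If X and Y are sets with permutation actions of the atoms in which every element is finitely supported, and both X and Y have finitely many orbits, then the product X × Y with the diagonal action π(x,y) = (π(x), π(y)) also has finitely many orbits. -/
/-!
Every orbit of `X × Y` meets `{x} × Y` for one of finitely many orbit representatives `x`, and
`(x, y)`, `(x, y')` lie in the same orbit once `y`, `y'` lie in the same orbit of the pointwise
stabiliser `Fix(A)` of a finite support `A` of `x`. So it suffices that `Fix(A)` has finitely many
orbits on `Y`. Inside the orbit of `y` with finite support `B`, the `Fix(A)`-orbit of `σ • y` only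
depends on which atoms of `B` the permutation `σ` sends into `A`, and where they go: two
permutations with the same such data differ on `B` by an element of `Fix(A)`, which extends a
finite partial injection of the atoms. This leaves finitely many possibilities.
-/

open MulAction Function

theorem Function.FactorsThrough.finite_range {ι β γ : Type*} [Finite β] {g : ι → γ} {f : ι → β}
    (h : g.FactorsThrough f) : (Set.range g).Finite := by
  obtain _ | ⟨⟨i₀⟩⟩ := isEmpty_or_nonempty ι
  · exact (Set.range_eq_empty g).symm ▸ Set.finite_empty
  refine (Set.finite_range (extend f g fun _ => g i₀)).subset ?_
  rintro _ ⟨i, rfl⟩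
  exact ⟨f i, h.extend_apply _ i⟩

namespace MulAction

variable {G X Y : Type*} [Group G] [MulAction G X] [MulAction G Y]

theorem exists_smul_eq_out (x : X) :
    ∃ g : G, g • x = (⟦x⟧ : orbitRel.Quotient G X).out :=
  Quotient.mk_out (s := orbitRel G X) x

theorem finite_orbitRel_quotient_of_le {H K : Subgroup G} (hHK : H ≤ K)
    [Finite (orbitRel.Quotient H Y)] : Finite (orbitRel.Quotient K Y) :=
  Finite.of_surjective
    (Quotient.map' (s₁ := orbitRel H Y) (s₂ := orbitRel K Y) id
      fun _ _ ⟨k, hk⟩ => ⟨⟨k, hHK k.2⟩, hk⟩)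
    fun q => q.inductionOn' fun y => ⟨Quotient.mk'' y, rfl⟩

theorem finite_orbitRel_quotient_prod [Finite (orbitRel.Quotient G X)]
    (hY : ∀ x : X, Finite (orbitRel.Quotient (stabilizer G x) Y)) :
    Finite (orbitRel.Quotient G (X × Y)) := by
  let f (q : orbitRel.Quotient G X) : orbitRel.Quotient (stabilizer G q.out) Y →
      orbitRel.Quotient G (X × Y) :=
    Quotient.lift (fun y => ⟦(q.out, y)⟧) fun _ _ ⟨g, hg⟩ =>
      Quotient.sound ⟨g, Prod.ext g.2 hg⟩
  refine Finite.of_surjective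
    (fun p : Σ q, orbitRel.Quotient (stabilizer G q.out) Y => f p.1 p.2) ?_
  refine Quotient.ind fun ⟨x, y⟩ => ?_
  obtain ⟨g, hg⟩ := exists_smul_eq_out (G := G) x
  refine ⟨⟨⟦x⟧, ⟦g • y⟧⟩, ?_⟩
  change ⟦(_, _)⟧ = _
  rw [← hg, ← orbitRel.Quotient.quotient_smul_eq (g := g) (a := (x, y)), Prod.smul_mk]

end MulAction

namespace Equiv.Perm

variable {α : Type*}

theorem exists_eqOn_of_injOn {s : Set α} {f : α → α} (hs : s.Finite) (hf : s.InjOn f) :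
    ∃ τ : Perm α, s.EqOn τ f := by
  let e : s ↪ α := ⟨s.domRestrict f, hf.injective⟩
  obtain ⟨τ, hτ⟩ : ∃ τ : α ≃ α, ∀ x : s, τ x = e x := by
    cases finite_or_infinite α
    · exact Cardinal.extend_function_finite e ⟨Equiv.refl α⟩
    · exact Cardinal.extend_function_of_lt e
        (hs.lt_aleph0.trans_le (Cardinal.aleph0_le_mk α)) ⟨Equiv.refl α⟩
  exact ⟨τ, fun x hx => hτ ⟨x, hx⟩⟩

theorem exists_mem_fixingSubgroup_mul_eqOn {A B : Set α} (hA : A.Finite) (hB : B.Finite)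
    {σ σ' : Perm α} (h : ∀ b ∈ B, σ b ∈ A ∨ σ' b ∈ A → σ b = σ' b) :
    ∃ τ ∈ fixingSubgroup (Perm α) A, B.EqOn ⇑(τ * σ) σ' := by
  classical
  let f (a : α) : α := if a ∈ A then a else σ' (σ⁻¹ a)
  have hf_of_mem : ∀ a ∈ A, f a = a := fun a ha => if_pos ha
  have hf_image : ∀ b ∈ B, f (σ b) = σ' b := by
    intro b hb
    by_cases hbA : σ b ∈ A
    · rw [hf_of_mem _ hbA, h b hb (.inl hbA)]
    · simp [f, hbA]
  have hf_not_mem : ∀ x ∈ A ∪ σ '' B, x ∉ A → f x ∉ A := by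
    rintro _ (hx | ⟨b, hb, rfl⟩) hxA
    · exact absurd hx hxA
    · rw [hf_image b hb]
      exact fun hA' => hxA (h b hb (.inr hA') ▸ hA')
  have hf : (A ∪ σ '' B).InjOn f := by
    intro x hx y hy hxy
    by_cases hxA : x ∈ A <;> by_cases hyA : y ∈ A
    · rwa [hf_of_mem x hxA, hf_of_mem y hyA] at hxy
    · exact (hf_not_mem y hy hyA (by rwa [← hxy, hf_of_mem x hxA])).elim
    · exact (hf_not_mem x hx hxA (by rwa [hxy, hf_of_mem y hyA])).elim
    · simpa [f, hxA, hyA] using hxy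
  obtain ⟨τ, hτ⟩ := exists_eqOn_of_injOn (hA.union (hB.image σ)) hf
  refine ⟨τ, (mem_fixingSubgroup_iff _).mpr fun a ha => ?_, fun b hb => ?_⟩
  · rw [Perm.smul_def, hτ (.inl ha), hf_of_mem a ha]
  · rw [coe_mul, comp_apply, hτ (.inr ⟨b, hb, rfl⟩), hf_image b hb]

variable {Y : Type*} [MulAction (Perm α) Y]

theorem smul_eq_smul_of_eqOn {B : Set α} {y : Y} (hy : Supports (Perm α) B y)
    {σ σ' : Perm α} (h : B.EqOn σ σ') : σ • y = σ' • y := by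
  rw [eq_comm, ← inv_smul_eq_iff, smul_smul]
  exact hy _ fun b hb => by simp [← h hb]

theorem finite_range_mk_smul_fixingSubgroup {A B : Set α} (hA : A.Finite) (hB : B.Finite)
    {y : Y} (hy : Supports (Perm α) B y) :
    (Set.range fun σ : Perm α =>
      (⟦σ • y⟧ : orbitRel.Quotient (fixingSubgroup (Perm α) A) Y)).Finite := by
  classical
  have := hA.to_subtype
  have := hB.to_subtype
  let trace (σ : Perm α) (b : B) : Option A := if h : σ b ∈ A then some ⟨σ b, h⟩ else none
  have eq_of_trace_eq {σ σ'} (hσ : trace σ = trace σ') : ∀ b ∈ B, σ b ∈ A → σ b = σ' b := by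
    intro b hb hbA
    have := congr_fun hσ ⟨b, hb⟩
    simp only [trace, dif_pos hbA] at this
    split_ifs at this
    simpa using this
  refine FactorsThrough.finite_range (f := trace) fun σ σ' hσ => ?_
  obtain ⟨τ, hτA, hτ⟩ := exists_mem_fixingSubgroup_mul_eqOn hA hB (σ := σ') (σ' := σ)
    fun b hb hbA => hbA.elim (eq_of_trace_eq hσ.symm b hb) fun h => (eq_of_trace_eq hσ b hb h).symm
  refine Quotient.sound ⟨⟨τ, hτA⟩, ?_⟩
  change τ • σ' • y = σ • y
  rw [smul_smul]
  exact smul_eq_smul_of_eqOn hy hτ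

theorem finite_orbitRel_quotient_fixingSubgroup [Finite (orbitRel.Quotient (Perm α) Y)]
    (hY : ∀ y : Y, ∃ B : Set α, B.Finite ∧ Supports (Perm α) B y) {A : Set α} (hA : A.Finite) :
    Finite (orbitRel.Quotient (fixingSubgroup (Perm α) A) Y) := by
  choose B hB hyB using hY
  refine Set.finite_univ_iff.mp ((Set.finite_iUnion fun q : orbitRel.Quotient (Perm α) Y =>
    finite_range_mk_smul_fixingSubgroup hA (hB q.out) (hyB q.out)).subset ?_)
  refine Quotient.ind fun y _ => Set.mem_iUnion.mpr ⟨⟦y⟧, ?_⟩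
  obtain ⟨σ, hσ⟩ := exists_smul_eq_out (G := Perm α) y
  exact ⟨σ⁻¹, by rw [← hσ]; exact congrArg _ (inv_smul_smul σ y)⟩

end Equiv.Perm

/-- If `X` and `Y` are sets with atoms (all elements finitely supported) with finitely many
orbits, then the product `X × Y` with the diagonal action has finitely many orbits. -/
theorem stmt_6 {X Y : Type*} [MulAction (Equiv.Perm ℕ) X] [MulAction (Equiv.Perm ℕ) Y]
    (hXsupp : ∀ x : X, ∃ α : Finset ℕ,
      ∀ π : Equiv.Perm ℕ, (∀ a ∈ α, π a = a) → π • x = x)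
    (hYsupp : ∀ y : Y, ∃ α : Finset ℕ,
      ∀ π : Equiv.Perm ℕ, (∀ a ∈ α, π a = a) → π • y = y)
    (hX : Finite (Quotient (MulAction.orbitRel (Equiv.Perm ℕ) X)))
    (hY : Finite (Quotient (MulAction.orbitRel (Equiv.Perm ℕ) Y))) :
    Finite (Quotient (MulAction.orbitRel (Equiv.Perm ℕ) (X × Y))) := by
  have := hX
  have := hY
  refine finite_orbitRel_quotient_prod fun x => ?_
  obtain ⟨A, hA⟩ := hXsupp x
  have : Finite (orbitRel.Quotient (fixingSubgroup (Equiv.Perm ℕ) (A : Set ℕ)) Y) := by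
    refine Equiv.Perm.finite_orbitRel_quotient_fixingSubgroup (fun y => ?_) A.finite_toSet
    obtain ⟨B, hB⟩ := hYsupp y
    exact ⟨B, B.finite_toSet, fun π hπ => hB π fun b hb => hπ hb⟩
  exact finite_orbitRel_quotient_of_le fun π hπ =>
    hA π fun a ha => (mem_fixingSubgroup_iff _).mp hπ a ha
end

section
/- Let S be a finite semigroup and x, y ∈ S. If xy is an infix of x, then xy is a prefix of x, i.e., there exists z ∈ S with xyz = x, or xy = x. Dually, if xy is an infix of y, then xy is a suffix of y. -/
/-- `x` is an infix of `y` in a semigroup. -/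
def SgIsInfix {S : Type*} [Semigroup S] (x y : S) : Prop :=
  y = x ∨ (∃ a, y = a * x) ∨ (∃ b, y = x * b) ∨ (∃ a b, y = a * x * b)

/-- `x` is a prefix of `y` in a semigroup. -/
def SgIsPrefix {S : Type*} [Semigroup S] (x y : S) : Prop :=
  y = x ∨ ∃ z, y = x * z

/-- `x` is a suffix of `y` in a semigroup. -/
def SgIsSuffix {S : Type*} [Semigroup S] (x y : S) : Prop :=
  y = x ∨ ∃ z, y = z * x

namespace Stmt13Aux

variable {S : Type*} [Semigroup S]

/-- `spow s n` is the product of `n+1` copies of `s`. -/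
def spow (s : S) : ℕ → S
  | 0 => s
  | n + 1 => spow s n * s

lemma spow_succ_left (s : S) (n : ℕ) : spow s (n + 1) = s * spow s n := by
  induction n with
  | zero => rfl
  | succ n ih =>
    show spow s (n + 1) * s = s * (spow s n * s)
    rw [ih, mul_assoc]

lemma spow_add (s : S) (a b : ℕ) : spow s (a + b + 1) = spow s a * spow s b := by
  induction b with
  | zero => rfl
  | succ b ih =>
    show spow s (a + b + 1) * s = spow s a * (spow s b * s)
    rw [ih, mul_assoc]

lemma exists_idem [Finite S] (s : S) : ∃ m, spow s m * spow s m = spow s m := by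
  obtain ⟨i, j, hne, heq⟩ := Finite.exists_ne_map_eq_of_infinite (spow s)
  wlog hij : i < j generalizing i j
  · exact this j i hne.symm heq.symm (by omega)
  set d := j - i with hd
  have hd1 : 1 ≤ d := by omega
  have hstep : ∀ n, i ≤ n → spow s (n + d) = spow s n := by
    intro n hn
    induction n, hn using Nat.le_induction with
    | base => rw [show i + d = j by omega]; exact heq.symm
    | succ n hn ih =>
      rw [show n + 1 + d = n + d + 1 by omega]
      show spow s (n + d) * s = spow s n * s
      rw [ih]
  have hmul : ∀ k n, i ≤ n → spow s (n + k * d) = spow s n := by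
    intro k
    induction k with
    | zero => simp
    | succ k ih =>
      intro n hn
      have : n + (k + 1) * d = n + k * d + d := by ring
      rw [this, hstep _ (by omega), ih n hn]
  refine ⟨(i + 1) * d - 1, ?_⟩
  have hm1 : (i + 1) * d - 1 + 1 = (i + 1) * d := by
    have : 1 ≤ (i + 1) * d := by nlinarith
    omega
  have hge : i ≤ (i + 1) * d - 1 := by nlinarith [hm1]
  calc spow s ((i + 1) * d - 1) * spow s ((i + 1) * d - 1)
      = spow s ((i + 1) * d - 1 + ((i + 1) * d - 1) + 1) := (spow_add ..).symm
    _ = spow s ((i + 1) * d - 1 + (i + 1) * d) := by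
        rw [show ((i+1)*d - 1 + ((i+1)*d - 1) + 1) = ((i+1)*d - 1 + ((i+1)*d - 1 + 1)) by omega,
          hm1]
    _ = spow s ((i + 1) * d - 1) := hmul (i + 1) _ hge

lemma iter [Finite S] {x a s : S} (h : x = a * x * s) :
    ∀ k, x = spow a k * x * spow s k := by
  intro k
  induction k with
  | zero => exact h
  | succ k ih =>
    calc x = a * x * s := h
      _ = a * (spow a k * x * spow s k) * s := by rw [← ih]
      _ = spow a (k + 1) * x * spow s (k + 1) := by
          rw [spow_succ_left a k, show spow s (k+1) = spow s k * s from rfl]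
          simp [mul_assoc]

/-- If `x = a * x * s` in a finite semigroup, then `x = x * s * z` for some `z`. -/
lemma key_right [Finite S] {x a s : S} (h : x = a * x * s) :
    ∃ z, x = x * s * z := by
  obtain ⟨m, hm⟩ := exists_idem s
  have hiter := iter h
  have hxe : x * spow s m = x := by
    calc x * spow s m = spow a m * x * spow s m * spow s m := by rw [← hiter]
      _ = spow a m * x * (spow s m * spow s m) := by rw [mul_assoc]
      _ = spow a m * x * spow s m := by rw [hm]
      _ = x := (hiter m).symm
  cases m with
  | zero =>
    refine ⟨s, ?_⟩
    have h1 : x * s = x := hxe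
    calc x = x * s := h1.symm
      _ = x * s * s := by conv_lhs => rw [← h1]
  | succ n =>
    refine ⟨spow s n, ?_⟩
    calc x = x * spow s (n + 1) := hxe.symm
      _ = x * (s * spow s n) := by rw [spow_succ_left]
      _ = x * s * spow s n := (mul_assoc ..).symm

/-- If `x = a * x * s` in a finite semigroup, then `x = z * (a * x)` for some `z`. -/
lemma key_left [Finite S] {x a s : S} (h : x = a * x * s) :
    ∃ z, x = z * (a * x) := by
  obtain ⟨m, hm⟩ := exists_idem a
  have hiter := iter h
  have hex : spow a m * x = x := by
    calc spow a m * x = spow a m * (spow a m * x * spow s m) := by rw [← hiter]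
      _ = spow a m * spow a m * x * spow s m := by simp [mul_assoc]
      _ = spow a m * x * spow s m := by rw [hm]
      _ = x := (hiter m).symm
  cases m with
  | zero =>
    refine ⟨a, ?_⟩
    have h1 : a * x = x := hex
    calc x = a * x := h1.symm
      _ = a * (a * x) := by conv_lhs => rw [← h1]
  | succ n =>
    exact ⟨spow a n, hex.symm.trans (mul_assoc _ _ _)⟩

end Stmt13Aux


open Stmt13Aux in
/-- In a finite semigroup: if `x*y` is an infix of `x` then it is a prefix of `x`;
dually, if `x*y` is an infix of `y` then it is a suffix of `y`. -/
theorem stmt_13 {S : Type*} [Semigroup S] [Finite S] (x y : S) :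
    (SgIsInfix (x * y) x → SgIsPrefix (x * y) x) ∧
    (SgIsInfix (x * y) y → SgIsSuffix (x * y) y) := by
  constructor
  · rintro (h | ⟨a, h⟩ | ⟨b, h⟩ | ⟨a, b, h⟩)
    · exact Or.inl h
    · rw [← mul_assoc] at h
      obtain ⟨z, hz⟩ := key_right h
      exact Or.inr ⟨z, hz⟩
    · exact Or.inr ⟨b, h⟩
    · have h' : x = a * x * (y * b) := h.trans (by simp [mul_assoc])
      obtain ⟨z, hz⟩ := key_right h'
      exact Or.inr ⟨b * z, hz.trans (by simp [mul_assoc])⟩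
  · rintro (h | ⟨a, h⟩ | ⟨b, h⟩ | ⟨a, b, h⟩)
    · exact Or.inl h
    · exact Or.inr ⟨a, h⟩
    · obtain ⟨z, hz⟩ := key_left (h : y = x * y * b)
      exact Or.inr ⟨z, hz⟩
    · have h' : y = (a * x) * y * b := h.trans (by simp [mul_assoc])
      obtain ⟨z, hz⟩ := key_left h'
      exact Or.inr ⟨z * a, hz.trans (by simp [mul_assoc])⟩
end

section
/- Let S be a finite semigroup. A sequence s₁, ..., s_n ∈ S (n ≥ 1) is smooth (each s_i is infix-equivalent to the full product s₁·s₂· ⋯ ·s_n) if and only if every pair of consecutive elements s_i, s_{i+1} is smooth (i.e., s_i, s_{i+1}, and s_i·s_{i+1} are pairwise infix-equivalent). -/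
/-- Infix equivalence (J-equivalence) in a semigroup. -/
def JEquiv {S : Type*} [Semigroup S] (x y : S) : Prop :=
  SgIsInfix x y ∧ SgIsInfix y x

theorem exists_eq_mul_pow_succ_of_eq_mul_mul {M : Type*} [Monoid M] [Finite M] {x a b : M}
    (h : x = a * x * b) : ∃ k, x = x * b ^ (k + 1) := by
  have hpow : ∀ n, x = a ^ n * x * b ^ n := by
    intro n
    induction n with
    | zero => simp
    | succ n ih =>
      calc x = a * (a ^ n * x * b ^ n) * b := by rw [← ih, ← h]
        _ = a ^ (n + 1) * x * b ^ (n + 1) := by rw [pow_succ', pow_succ]; simp only [mul_assoc]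
  obtain ⟨i, j, hne, hij⟩ := Finite.exists_ne_map_eq_of_infinite (b ^ · : ℕ → M)
  wlog hlt : i < j generalizing i j
  · exact this j i hne.symm hij.symm (by omega)
  refine ⟨j - i - 1, ?_⟩
  calc x = a ^ i * x * b ^ i := hpow i
    _ = a ^ i * x * b ^ j := by rw [hij]
    _ = a ^ i * x * b ^ i * b ^ (j - i - 1 + 1) := by
      rw [mul_assoc _ (b ^ i), ← pow_add]; congr 2; omega
    _ = x * b ^ (j - i - 1 + 1) := by rw [← hpow i]

theorem exists_eq_mul_mul_of_eq_mul_mul_mul {M : Type*} [Monoid M] [Finite M] {x y a b : M}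
    (h : x = a * (x * y) * b) : ∃ c, x = x * y * c := by
  obtain ⟨k, hk⟩ := exists_eq_mul_pow_succ_of_eq_mul_mul (x := x) (a := a) (b := y * b)
    (by nth_rw 1 [h]; simp only [mul_assoc])
  exact ⟨b * (y * b) ^ k, by nth_rw 1 [hk]; rw [pow_succ']; simp only [mul_assoc]⟩

instance WithOne.finite {S : Type*} [Finite S] : Finite (WithOne S) :=
  inferInstanceAs (Finite (Option S))

section

variable {S : Type*} [Semigroup S]

theorem sgIsInfix_mul_left (x a : S) : SgIsInfix x (a * x) := Or.inr (Or.inl ⟨a, rfl⟩)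

theorem sgIsInfix_mul_right (x b : S) : SgIsInfix x (x * b) := Or.inr (Or.inr (Or.inl ⟨b, rfl⟩))

theorem sgIsInfix_iff_withOne {x y : S} :
    SgIsInfix x y ↔ ∃ a b : WithOne S, (y : WithOne S) = a * x * b := by
  constructor
  · rintro (rfl | ⟨a, rfl⟩ | ⟨b, rfl⟩ | ⟨a, b, rfl⟩)
    · exact ⟨1, 1, by simp⟩
    · exact ⟨a, 1, by simp⟩
    · exact ⟨1, b, by simp⟩
    · exact ⟨a, b, by simp⟩
  · rintro ⟨a, b, h⟩
    induction a using WithOne.recOneCoe <;> induction b using WithOne.recOneCoe <;>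
      simp only [one_mul, mul_one, ← WithOne.coe_mul, WithOne.coe_inj] at h <;> subst h
    exacts [Or.inl rfl, sgIsInfix_mul_right _ _, sgIsInfix_mul_left _ _,
      Or.inr (Or.inr (Or.inr ⟨_, _, rfl⟩))]

theorem SgIsInfix.trans {x y z : S} (hxy : SgIsInfix x y) (hyz : SgIsInfix y z) :
    SgIsInfix x z := by
  rw [sgIsInfix_iff_withOne] at *
  obtain ⟨a, b, hz⟩ := hyz
  obtain ⟨c, d, hy⟩ := hxy
  exact ⟨a * c, d * b, by rw [hz, hy]; simp only [mul_assoc]⟩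

theorem foldl_mul_eq_mul_foldl (x y : S) (l : List S) :
    l.foldl (· * ·) (x * y) = x * l.foldl (· * ·) y :=
  List.foldl_assoc (ha := ⟨mul_assoc⟩)

theorem sgIsInfix_foldl (x : S) (l : List S) : SgIsInfix x (l.foldl (· * ·) x) := by
  cases l with
  | nil => exact Or.inl rfl
  | cons y l => exact foldl_mul_eq_mul_foldl x y l ▸ sgIsInfix_mul_right x _

namespace JEquiv

theorem refl (x : S) : JEquiv x x := ⟨Or.inl rfl, Or.inl rfl⟩

theorem symm {x y : S} (h : JEquiv x y) : JEquiv y x := ⟨h.2, h.1⟩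

theorem trans {x y z : S} (hxy : JEquiv x y) (hyz : JEquiv y z) : JEquiv x z :=
  ⟨hxy.1.trans hyz.1, hyz.2.trans hxy.2⟩

theorem mul_left [Finite S] {t u : S} (h : JEquiv t (t * u)) (s : S) :
    JEquiv (s * t) (s * t * u) := by
  refine ⟨sgIsInfix_mul_right _ _, sgIsInfix_iff_withOne.mpr ?_⟩
  obtain ⟨a, b, hab⟩ := sgIsInfix_iff_withOne.mp h.2
  rw [WithOne.coe_mul] at hab
  obtain ⟨c, hc⟩ := exists_eq_mul_mul_of_eq_mul_mul_mul hab
  rw [mul_assoc] at hc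
  exact ⟨1, c, by simp only [WithOne.coe_mul, one_mul, mul_assoc, ← hc]⟩

end JEquiv

def SmoothPair (a b : S) : Prop :=
  JEquiv a (a * b) ∧ JEquiv b (a * b) ∧ JEquiv a b

theorem SmoothPair.mul_left [Finite S] {s t u : S} (hst : SmoothPair s t)
    (htu : SmoothPair t u) : SmoothPair (s * t) u := by
  have hstu : JEquiv (s * t) (s * t * u) := htu.1.mul_left s
  have hst_u : JEquiv (s * t) u := hst.2.1.symm.trans htu.2.2
  exact ⟨hstu, hst_u.symm.trans hstu, hst_u⟩

theorem SmoothPair.isChain_mul_cons [Finite S] {s t : S} {l : List S} (hst : SmoothPair s t)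
    (h : (t :: l).IsChain SmoothPair) : (s * t :: l).IsChain SmoothPair := by
  cases l with
  | nil => exact List.isChain_singleton _
  | cons u l =>
    rw [List.isChain_cons_cons] at h ⊢
    exact ⟨hst.mul_left h.1, h.2⟩

theorem isChain_smoothPair_of_forall_jequiv_foldl (s : S) (l : List S)
    (h : ∀ x ∈ s :: l, JEquiv x (l.foldl (· * ·) s)) : (s :: l).IsChain SmoothPair := by
  induction l generalizing s with
  | nil => exact List.isChain_singleton _
  | cons t l ih =>
    have hs : JEquiv s (l.foldl (· * ·) (s * t)) := h s List.mem_cons_self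
    have ht : JEquiv t (l.foldl (· * ·) (s * t)) := h t (by simp)
    have hst : SgIsInfix (s * t) (l.foldl (· * ·) (s * t)) := sgIsInfix_foldl _ _
    have hprod : JEquiv (l.foldl (· * ·) (s * t)) (l.foldl (· * ·) t) :=
      ⟨ht.2.trans (sgIsInfix_foldl t l),
        foldl_mul_eq_mul_foldl s t l ▸ sgIsInfix_mul_left _ s⟩
    rw [List.isChain_cons_cons]
    refine ⟨⟨⟨sgIsInfix_mul_right s t, hst.trans hs.2⟩, ⟨sgIsInfix_mul_left t s, hst.trans ht.2⟩,
      hs.trans ht.symm⟩, ih t fun x hx => (h x (List.mem_cons_of_mem s hx)).trans hprod⟩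

theorem forall_jequiv_foldl_of_isChain_smoothPair [Finite S] (s : S) (l : List S)
    (h : (s :: l).IsChain SmoothPair) : ∀ x ∈ s :: l, JEquiv x (l.foldl (· * ·) s) := by
  induction l generalizing s with
  | nil => simp [JEquiv.refl]
  | cons t l ih =>
    rw [List.isChain_cons_cons] at h
    have hmerged := ih (s * t) (h.1.isChain_mul_cons h.2)
    have hst : JEquiv (s * t) (l.foldl (· * ·) (s * t)) := hmerged _ List.mem_cons_self
    rintro x (_ | ⟨_, _ | ⟨_, hx⟩⟩)
    · exact h.1.1.trans hst
    · exact h.1.2.1.trans hst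
    · exact hmerged x (List.mem_cons_of_mem _ hx)

end

/-- In a finite semigroup, a nonempty sequence `s :: l` is smooth (every element is
J-equivalent to the product of the whole sequence) iff each pair of consecutive elements
`a, b` is smooth, i.e. `a`, `b` and `a*b` are pairwise J-equivalent. -/
theorem stmt_14 {S : Type*} [Semigroup S] [Finite S] (s : S) (l : List S) :
    (∀ x ∈ s :: l, JEquiv x (l.foldl (· * ·) s)) ↔
      List.Chain' (fun a b => JEquiv a (a * b) ∧ JEquiv b (a * b) ∧ JEquiv a b) (s :: l) :=
  ⟨isChain_smoothPair_of_forall_jequiv_foldl s l, forall_jequiv_foldl_of_isChain_smoothPair s l⟩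
end

section
/- (Simon's factorization forest theorem) For every finite semigroup S there exists a number h_S such that every nonempty sequence s₁, ..., s_n ∈ S admits a factorization tree of height at most h_S in which every internal node is either binary or idempotent (all of its children carry the same idempotent value e with ee = e). -/
/-!
Induction on `|S|`. Fix an element `a` that is maximal for Green's preorder `≤J`; the elements
not `J`-above `a` form a smaller subsemigroup `T`. Cutting a word greedily into maximal factors
whose value is `J`-above `a`, each followed by the one letter that leaves this `J`-class, writes
it as a product of blocks with values in `T`, followed by one such factor. The sequence of block
values has a tree by induction, and a word whose value is `J`-above `a` is `J`-smooth: all its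
nonempty infixes are `J`-equivalent.

A smooth word of value `p` is cut at the positions where its prefix value returns to `p`. By
stability of finite monoids, the blocks after the first have values in a left-zero semigroup
(`xy = x`), where trees of height `2|E|` exist by induction on `|E|`; and each block minus its
last letter has fewer distinct prefix values than the whole word, which drives an induction on
that number.
-/

/-- `FactTreeLe l v h` says that the sequence `l` of semigroup elements admits a
factorization tree of height at most `h` whose root value is `v` (leaves, read left to
right, are the sequence `l`; every internal node is either binary or idempotent, and its
value is the product of the values of its children). -/
inductive FactTreeLe {S : Type*} [Semigroup S] : List S → S → ℕ → Prop
  | leaf (s : S) (n : ℕ) : FactTreeLe [s] s n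
  | node {l₁ l₂ : List S} {v₁ v₂ : S} {n : ℕ} :
      FactTreeLe l₁ v₁ n → FactTreeLe l₂ v₂ n →
      FactTreeLe (l₁ ++ l₂) (v₁ * v₂) (n + 1)
  | idem {e : S} (he : e * e = e) {n : ℕ} (children : List (List S))
      (hlen : 2 ≤ children.length)
      (hch : ∀ l ∈ children, FactTreeLe l e n) :
      FactTreeLe children.flatten e (n + 1)

namespace List

variable {α β : Type*}

theorem exists_greedy_split (G : List α → Prop) (w : List α) :
    ∃ (cs : List (List α)) (r : List α), w = cs.flatten ++ r ∧
      (∀ c ∈ cs, ∃ b x, c = b ++ [x] ∧ (b = [] ∨ G b) ∧ ¬ G c) ∧ (r = [] ∨ G r) := by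
  induction w using reverseRecOn with
  | nil => exact ⟨[], [], rfl, by simp, Or.inl rfl⟩
  | append_singleton w x ih =>
    obtain ⟨cs, r, rfl, hcs, hr⟩ := ih
    by_cases hG : G (r ++ [x])
    · exact ⟨cs, r ++ [x], by simp, hcs, Or.inr hG⟩
    · refine ⟨cs ++ [r ++ [x]], [], by simp, fun c hc => ?_, Or.inl rfl⟩
      rcases mem_append.1 hc with hc | hc
      · exact hcs c hc
      · obtain rfl := mem_singleton.1 hc
        exact ⟨r, x, rfl, hr, hG⟩

theorem exists_minimal_blocks (H : List α → Prop) (w : List α) :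
    ∃ (cs : List (List α)) (r : List α), w = cs.flatten ++ r ∧
      (∀ c ∈ cs, ∃ b x, c = b ++ [x] ∧ H c ∧ ∀ π, π <+: b → π ≠ [] → ¬ H π) ∧
      ∀ π, π <+: r → π ≠ [] → ¬ H π := by
  have hnil : ∀ π, π <+: ([] : List α) → π ≠ [] → ¬ H π :=
    fun π hπ hne => (hne (prefix_nil.1 hπ)).elim
  obtain ⟨cs, r, hw, hcs, hr⟩ :=
    exists_greedy_split (fun l => ∀ π, π <+: l → π ≠ [] → ¬ H π) w
  refine ⟨cs, r, hw, fun c hc => ?_, hr.elim (· ▸ hnil) id⟩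
  obtain ⟨b, x, rfl, hb, hbx⟩ := hcs c hc
  replace hb : ∀ π, π <+: b → π ≠ [] → ¬ H π := hb.elim (· ▸ hnil) id
  push Not at hbx
  obtain ⟨π, hπ, hne, hHπ⟩ := hbx
  rcases prefix_concat_iff.1 hπ with rfl | hπ
  · exact ⟨b, x, rfl, hHπ, hb⟩
  · exact absurd hHπ (hb π hπ hne)

theorem exists_eq_append_flatten_cons (a : α) (t : List α) :
    ∃ (t₀ : List α) (bs : List (List α)), t = t₀ ++ bs.flatten ∧ a ∉ t₀ ∧
      ∀ b ∈ bs, ∃ t', b = a :: t' ∧ a ∉ t' := by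
  induction t with
  | nil => exact ⟨[], [], rfl, not_mem_nil, by simp⟩
  | cons x t ih =>
    obtain ⟨t₀, bs, rfl, ht₀, hbs⟩ := ih
    by_cases hx : x = a
    · subst hx
      refine ⟨[], (x :: t₀) :: bs, by simp, not_mem_nil, fun b hb => ?_⟩
      rcases mem_cons.1 hb with rfl | hb
      exacts [⟨t₀, rfl, ht₀⟩, hbs b hb]
    · exact ⟨x :: t₀, bs, rfl, by simp [Ne.symm hx, ht₀], hbs⟩

theorem exists_eq_flatten_of_map_eq_flatten {f : α → β} :
    ∀ {l : List α} {L : List (List β)}, l.map f = L.flatten →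
      ∃ L' : List (List α), l = L'.flatten ∧ L'.map (map f) = L
  | l, [], h => ⟨[], by simpa using h, rfl⟩
  | l, c :: L, h => by
    obtain ⟨l₁, l₂, rfl, rfl, h₂⟩ := map_eq_append_iff.1 (h.trans flatten_cons)
    obtain ⟨L', rfl, rfl⟩ := exists_eq_flatten_of_map_eq_flatten h₂
    exact ⟨l₁ :: L', by simp, rfl⟩

theorem mul_prod_eq_self {M : Type*} [Monoid M] {a : M} {l : List M}
    (h : ∀ x ∈ l, a * x = a) : a * l.prod = a :=
  l.prod_induction (a * · = a) (fun x y hx hy => by rw [← mul_assoc, hx, hy]) (mul_one a) h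

end List

section Green

variable {M : Type*} [Monoid M]

/-- Green's preorder `x ≤J y` on a monoid. -/
def JLe (x y : M) : Prop := ∃ u v, x = u * y * v

theorem JLe.refl (x : M) : JLe x x := ⟨1, 1, by simp⟩

theorem JLe.trans {x y z : M} : JLe x y → JLe y z → JLe x z
  | ⟨u, v, hx⟩, ⟨u', v', hy⟩ => ⟨u * u', v' * v, by rw [hx, hy]; simp only [mul_assoc]⟩

theorem jLe_mul_right (x y : M) : JLe (x * y) x := ⟨1, y, by simp⟩

theorem jLe_mul_left (x y : M) : JLe (x * y) y := ⟨x, 1, by simp⟩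

theorem exists_pow_mul_eq_of_eq_mul_mul [Finite M] {x a b : M} (h : x = a * x * b) :
    ∃ n, a ^ (n + 1) * x = x ∧ x * b ^ (n + 1) = x := by
  have hk : ∀ k, x = a ^ k * x * b ^ k := by
    intro k
    induction k with
    | zero => simp
    | succ k ih =>
      calc x = a * (a ^ k * x * b ^ k) * b := by rw [← ih]; exact h
        _ = a ^ (k + 1) * x * b ^ (k + 1) := by rw [pow_succ', pow_succ]; simp only [mul_assoc]
  obtain ⟨i, j, hne, hij⟩ := Finite.exists_ne_map_eq_of_infinite fun k => (a ^ k, b ^ k)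
  wlog hlt : i < j generalizing i j
  · exact this j i hne.symm hij.symm (by omega)
  obtain ⟨n, rfl⟩ := Nat.exists_eq_add_of_lt hlt
  obtain ⟨ha, hb⟩ := Prod.mk.inj hij
  refine ⟨n, ?_, ?_⟩
  · calc a ^ (n + 1) * x = a ^ (i + n + 1) * x * b ^ i := by
          conv_lhs => rw [hk i]
          rw [show i + n + 1 = n + 1 + i by omega, pow_add a (n + 1) i]; simp only [mul_assoc]
      _ = x := by rw [← ha, ← hk]
  · calc x * b ^ (n + 1) = a ^ i * x * b ^ (i + n + 1) := by
          conv_lhs => rw [hk i]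
          rw [show i + n + 1 = i + (n + 1) by omega, pow_add b i (n + 1)]; simp only [mul_assoc]
      _ = x := by rw [← hb, ← hk]

/-- Stability of finite monoids: `x ≤J xy` forces `x ≤R xy`. -/
theorem exists_eq_mul_of_jLe_mul_right [Finite M] {x y : M} (h : JLe x (x * y)) :
    ∃ z, x = x * y * z := by
  obtain ⟨u, v, huv⟩ := h
  obtain ⟨n, -, hn⟩ := exists_pow_mul_eq_of_eq_mul_mul (a := u) (b := y * v)
    (by simpa only [mul_assoc] using huv)
  refine ⟨v * (y * v) ^ n, ?_⟩
  calc x = x * (y * v) ^ (n + 1) := hn.symm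
    _ = x * y * (v * (y * v) ^ n) := by rw [pow_succ']; simp only [mul_assoc]

/-- Stability of finite monoids: `x ≤J yx` forces `x ≤L yx`. -/
theorem exists_eq_mul_of_jLe_mul_left [Finite M] {x y : M} (h : JLe x (y * x)) :
    ∃ z, x = z * (y * x) := by
  obtain ⟨u, v, huv⟩ := h
  obtain ⟨n, hn, -⟩ := exists_pow_mul_eq_of_eq_mul_mul (a := u * y) (b := v)
    (by simpa only [mul_assoc] using huv)
  refine ⟨(u * y) ^ n * u, ?_⟩
  calc x = (u * y) ^ (n + 1) * x := hn.symm
    _ = (u * y) ^ n * u * (y * x) := by rw [pow_succ]; simp only [mul_assoc]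

theorem IsIdempotentElem.mul_eq_of_jLe [Finite M] {e x y : M} (he : IsIdempotentElem e)
    (hxy : x * y = e) (hx : JLe x e) : e * x = x := by
  obtain ⟨z, hz⟩ := exists_eq_mul_of_jLe_mul_right (hxy ▸ hx)
  rw [hz, hxy, ← mul_assoc, he.eq]

end Green

section Trees

variable {S : Type*} [Semigroup S]

instance [Finite S] : Finite (WithOne S) := inferInstanceAs (Finite (Option S))

/-- The product of a word, taken in `WithOne S` so that the empty word has a value too. -/
def wordProd (l : List S) : WithOne S := (l.map (↑)).prod

@[simp] theorem wordProd_nil : wordProd ([] : List S) = 1 := rfl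

@[simp] theorem wordProd_singleton (x : S) : wordProd [x] = x := by simp [wordProd]

@[simp] theorem wordProd_cons (x : S) (l : List S) : wordProd (x :: l) = x * wordProd l := by
  simp [wordProd]

@[simp] theorem wordProd_append (l₁ l₂ : List S) :
    wordProd (l₁ ++ l₂) = wordProd l₁ * wordProd l₂ := by simp [wordProd]

theorem wordProd_flatten (L : List (List S)) : wordProd L.flatten = (L.map wordProd).prod := by
  rw [wordProd, List.map_flatten, List.prod_flatten, List.map_map]
  rfl

theorem mul_wordProd_flatten_eq {p : WithOne S} {L : List (List S)}
    (h : ∀ l ∈ L, p * wordProd l = p) : p * wordProd L.flatten = p := by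
  rw [wordProd_flatten]
  exact List.mul_prod_eq_self (by simpa using h)

namespace FactTreeLe

open List

theorem mono {l : List S} {v : S} {n m : ℕ} (h : FactTreeLe l v n) (hnm : n ≤ m) :
    FactTreeLe l v m := by
  induction h generalizing m with
  | leaf s n => exact .leaf s m
  | node _ _ ih₁ ih₂ =>
    obtain ⟨m, rfl⟩ : ∃ m', m = m' + 1 := ⟨m - 1, by omega⟩
    exact .node (ih₁ (by omega)) (ih₂ (by omega))
  | idem he children hlen _ ih =>
    obtain ⟨m, rfl⟩ : ∃ m', m = m' + 1 := ⟨m - 1, by omega⟩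
    exact .idem he children hlen fun l hl => ih l hl (by omega)

theorem coe_eq {l : List S} {v : S} {n : ℕ} (h : FactTreeLe l v n) :
    (v : WithOne S) = wordProd l := by
  induction h with
  | leaf s n => simp
  | node _ _ ih₁ ih₂ => simp [ih₁, ih₂]
  | @idem e he n children hlen _ ih =>
    have he' : IsIdempotentElem (e : WithOne S) := by
      rw [IsIdempotentElem, ← WithOne.coe_mul, he]
    rw [wordProd_flatten, prod_eq_pow_card _ (e : WithOne S)
      (by simpa using fun l hl => (ih l hl).symm), length_map, he'.pow_eq (by omega)]

theorem mul_eq_left {l : List S} {a v : S} {n : ℕ} (h : FactTreeLe l v n)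
    (ha : ∀ x ∈ l, a * x = a) : a * v = a := by
  apply WithOne.coe_injective
  rw [WithOne.coe_mul, h.coe_eq, wordProd]
  exact mul_prod_eq_self (by simpa [← WithOne.coe_mul] using ha)

theorem map {T : Type*} [Semigroup T] (f : S →ₙ* T) {l : List S} {v : S} {n : ℕ}
    (h : FactTreeLe l v n) : FactTreeLe (l.map f) (f v) n := by
  induction h with
  | leaf s n => exact .leaf _ _
  | node _ _ ih₁ ih₂ => rw [map_append, map_mul]; exact .node ih₁ ih₂
  | idem he children hlen _ ih =>
    rw [map_flatten]
    exact .idem (by rw [← map_mul, he]) _ (by simpa using hlen) (by simpa using ih)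

theorem graft {f : List S → S} {n₁ n₂ : ℕ} {ts : List S} {v : S} (t : FactTreeLe ts v n₂) :
    ∀ {ls : List (List S)}, ls.map f = ts → (∀ l ∈ ls, FactTreeLe l (f l) n₁) →
      FactTreeLe ls.flatten v (n₁ + n₂) := by
  induction t with
  | leaf s n =>
    intro ls hls hf
    obtain ⟨l, rfl, rfl⟩ := map_eq_singleton_iff.1 hls
    simpa using (hf l (mem_singleton_self l)).mono (by omega)
  | node _ _ ih₁ ih₂ =>
    intro ls hls hf
    obtain ⟨ls₁, ls₂, rfl, h₁, h₂⟩ := map_eq_append_iff.1 hls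
    rw [flatten_append]
    exact .node (ih₁ h₁ fun l hl => hf l (mem_append_left _ hl))
      (ih₂ h₂ fun l hl => hf l (mem_append_right _ hl))
  | idem he children hlen _ ih =>
    intro ls hls hf
    obtain ⟨L, rfl, rfl⟩ := exists_eq_flatten_of_map_eq_flatten hls
    rw [flatten_flatten]
    refine .idem he (L.map flatten) (by simpa using hlen) ?_
    simp only [mem_map]
    rintro _ ⟨l, hl, rfl⟩
    exact ih (l.map f) (mem_map_of_mem hl) rfl fun x hx => hf x (mem_flatten_of_mem hl hx)

end FactTreeLe

abbrev FactHeightLe (P : List S → Prop) (h : ℕ) : Prop :=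
  ∀ l, l ≠ [] → P l → ∃ v, FactTreeLe l v h

namespace FactHeightLe

open List

variable {P Q : List S → Prop} {h h₁ h₂ : ℕ}

theorem mono (hP : FactHeightLe P h) (hQP : ∀ l, l ≠ [] → Q l → P l) (hh : h ≤ h₁) :
    FactHeightLe Q h₁ := fun l hl hQ =>
  let ⟨v, hv⟩ := hP l hl (hQP l hl hQ)
  ⟨v, hv.mono hh⟩

theorem singleton (h : ℕ) : FactHeightLe (fun l : List S => ∃ x, l = [x]) h := by
  rintro _ - ⟨x, rfl⟩
  exact ⟨x, .leaf x h⟩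

theorem append (hP : FactHeightLe P h₁) (hQ : FactHeightLe Q h₂) :
    FactHeightLe (fun w => ∃ l₁ l₂, w = l₁ ++ l₂ ∧ P l₁ ∧ Q l₂) (max h₁ h₂ + 1) := by
  rintro _ hw ⟨l₁, l₂, rfl, hl₁P, hl₂Q⟩
  rcases eq_or_ne l₁ [] with rfl | hl₁
  · obtain ⟨v, hv⟩ := hQ l₂ (by simpa using hw) hl₂Q
    exact ⟨v, by simpa using hv.mono (by omega)⟩
  rcases eq_or_ne l₂ [] with rfl | hl₂
  · obtain ⟨v, hv⟩ := hP l₁ hl₁ hl₁P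
    exact ⟨v, by simpa using hv.mono (by omega)⟩
  obtain ⟨v₁, hv₁⟩ := hP l₁ hl₁ hl₁P
  obtain ⟨v₂, hv₂⟩ := hQ l₂ hl₂ hl₂Q
  exact ⟨v₁ * v₂, .node (hv₁.mono (le_max_left _ _)) (hv₂.mono (le_max_right _ _))⟩

theorem flatten {R : S → Prop} (hP : FactHeightLe P h₁) (hR : FactHeightLe (∀ v ∈ ·, R v) h₂)
    (hPR : ∀ l, l ≠ [] → P l → ∀ v : S, (v : WithOne S) = wordProd l → R v) :
    FactHeightLe (fun w => ∃ ls : List (List S), w = ls.flatten ∧ ∀ l ∈ ls, l ≠ [] ∧ P l)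
      (h₁ + h₂) := by
  rintro _ hw ⟨ls, rfl, hls⟩
  obtain ⟨x, -⟩ := exists_mem_of_ne_nil _ hw
  have : Nonempty S := ⟨x⟩
  choose! f hf using fun l hl => hP l (hls l hl).1 (hls l hl).2
  have hne : ls.map f ≠ [] := by
    rintro h
    exact hw (by simp [map_eq_nil_iff.1 h])
  obtain ⟨v, hv⟩ := hR _ hne (by
    simp only [mem_map]
    rintro _ ⟨l, hl, rfl⟩
    exact hPR l (hls l hl).1 (hls l hl).2 _ (hf l hl).coe_eq)
  exact ⟨v, hv.graft rfl hf⟩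

theorem of_subsemigroup (T : Subsemigroup S) (hT : FactHeightLe (fun _ : List T => True) h) :
    FactHeightLe (fun l : List S => ∀ x ∈ l, x ∈ T) h := by
  intro l hl hlT
  lift l to List T using hlT
  obtain ⟨v, hv⟩ := hT l (by rintro rfl; exact hl rfl) trivial
  exact ⟨v, hv.map (MulMemClass.subtype T)⟩

end FactHeightLe

theorem factHeightLe_of_leftZero [DecidableEq S] (E : Finset S)
    (hE : ∀ x ∈ E, ∀ y ∈ E, x * y = x) : FactHeightLe (fun l => ∀ x ∈ l, x ∈ E) (2 * E.card) := by
  induction E using Finset.strongInduction with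
  | H E ih =>
  rintro l hl hlE
  obtain ⟨a, t, rfl⟩ := List.exists_cons_of_ne_nil hl
  have haE : a ∈ E := hlE a List.mem_cons_self
  have hblock : ∀ t', a ∉ t' → (∀ x ∈ t', x ∈ E) →
      FactTreeLe (a :: t') a (2 * (E.erase a).card + 1) := by
    intro t' ha ht'
    rcases eq_or_ne t' [] with rfl | ht'ne
    · exact .leaf a _
    obtain ⟨v, hv⟩ := ih (E.erase a) (Finset.erase_ssubset haE)
      (fun x hx y hy => hE x (Finset.mem_of_mem_erase hx) y (Finset.mem_of_mem_erase hy)) t' ht'ne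
      fun x hx => Finset.mem_erase.2 ⟨ne_of_mem_of_not_mem hx ha, ht' x hx⟩
    simpa [hv.mul_eq_left fun x hx => hE a haE x (ht' x hx)] using FactTreeLe.node (.leaf a _) hv
  obtain ⟨t₀, bs, rfl, ht₀, hbs⟩ := List.exists_eq_append_flatten_cons a t
  have hw : a :: (t₀ ++ bs.flatten) = ((a :: t₀) :: bs).flatten := by simp
  rw [hw] at hlE ⊢
  have hBs : ∀ b ∈ (a :: t₀) :: bs, FactTreeLe b a (2 * (E.erase a).card + 1) := by
    refine List.forall_mem_cons.2 ⟨hblock t₀ ht₀ fun x hx => hlE x ?_, fun b hb => ?_⟩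
    · exact List.mem_flatten_of_mem List.mem_cons_self (List.mem_cons_of_mem a hx)
    obtain ⟨t', rfl, ht'⟩ := hbs b hb
    exact hblock t' ht' fun x hx =>
      hlE x (List.mem_flatten_of_mem (List.mem_cons_of_mem _ hb) (List.mem_cons_of_mem a hx))
  have hcard : 2 * (E.erase a).card + 2 = 2 * E.card := by
    rw [← Finset.card_erase_add_one haE]; ring
  rcases bs with _ | ⟨b, bs⟩
  · exact ⟨a, by simpa using (hBs _ List.mem_cons_self).mono (by omega)⟩
  · exact ⟨a, hcard ▸ .idem (hE a haE a haE) _ (by simp) hBs⟩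

end Trees

section Smooth

variable {S : Type*} [Semigroup S]

open List

/-- All nonempty infixes are `J`-equivalent to `w`: the reverse inequality holds for any infix. -/
def JSmooth (w : List S) : Prop :=
  ∀ z, z <:+: w → z ≠ [] → JLe (wordProd z) (wordProd w)

def prefixProds (w : List S) : Set (WithOne S) :=
  {x | ∃ π, π <+: w ∧ π ≠ [] ∧ wordProd π = x}

theorem jLe_wordProd_of_infix {z w : List S} (h : z <:+: w) : JLe (wordProd w) (wordProd z) := by
  obtain ⟨s, t, rfl⟩ := h
  exact ⟨wordProd s, wordProd t, by simp [mul_assoc]⟩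

theorem JSmooth.of_infix {z w : List S} (hw : JSmooth w) (hz : z <:+: w) : JSmooth z :=
  fun y hy hne => (hw y (hy.trans hz) hne).trans (jLe_wordProd_of_infix hz)

theorem ncard_prefixProds_lt [Finite S] {w pre u : List S} (hw : w ≠ []) (hpre : pre ++ u <+: w)
    (q : WithOne S) (hmin : ∀ π, π <+: u → π ≠ [] → wordProd pre * wordProd π ≠ wordProd w)
    (hq : ∀ π, π <+: u → π ≠ [] → q * (wordProd pre * wordProd π) = wordProd π) :
    (prefixProds u).ncard < (prefixProds w).ncard := by
  have hsub : prefixProds u ⊆ (q * ·) '' (prefixProds w \ {wordProd w}) := by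
    rintro _ ⟨π, hπ, hne, rfl⟩
    refine ⟨wordProd (pre ++ π), ⟨⟨pre ++ π, ((prefix_append_right_inj pre).2 hπ).trans hpre,
      by simp [hne], rfl⟩, by simpa using hmin π hπ hne⟩, by simpa using hq π hπ hne⟩
  calc (prefixProds u).ncard ≤ (prefixProds w \ {wordProd w}).ncard :=
        (Set.ncard_le_ncard hsub).trans Set.ncard_image_le
    _ < (prefixProds w).ncard :=
        Set.ncard_sdiff_singleton_lt_of_mem ⟨w, prefix_refl w, hw, rfl⟩

theorem exists_first_block_tail (w : List S) (hw : w ≠ []) :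
    ∃ (u₁ : List S) (x₁ : S) (bs : List (List S)), w = u₁ ++ [x₁] ++ bs.flatten ∧
      (∀ π, π <+: u₁ → π ≠ [] → wordProd π ≠ wordProd w) ∧
      ∀ b ∈ bs, ∃ pre u x, b = u ++ [x] ∧ pre ++ b <+: w ∧ wordProd pre = wordProd w ∧
        wordProd w * wordProd b = wordProd w ∧
        ∀ π, π <+: u → π ≠ [] → wordProd w * wordProd π ≠ wordProd w := by
  obtain ⟨cs, r, hwcs, hcs, hr⟩ := exists_minimal_blocks (wordProd · = wordProd w) w
  obtain ⟨c₁, cs, rfl⟩ : ∃ c₁ cs', cs = c₁ :: cs' := by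
    refine exists_cons_of_ne_nil fun hcs => hr w ?_ hw rfl
    simp [hwcs, hcs]
  obtain ⟨u₁, x₁, rfl, hc₁, hu₁⟩ := hcs _ mem_cons_self
  obtain ⟨bs, r', ht, hbs, hr'⟩ :=
    exists_minimal_blocks (wordProd w * wordProd · = wordProd w) (cs.flatten ++ r)
  have hfix : ∀ L ⊆ bs, wordProd w * wordProd L.flatten = wordProd w := fun L hL =>
    mul_wordProd_flatten_eq fun b hb => by obtain ⟨-, -, -, h, -⟩ := hbs b (hL hb); exact h
  have hw' : w = u₁ ++ [x₁] ++ bs.flatten ++ r' := by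
    rw [hwcs, flatten_cons, append_assoc, ht]; simp
  have hr'nil : r' = [] := by
    by_contra hne
    refine hr' r' (prefix_refl _) hne ?_
    calc wordProd w * wordProd r' = wordProd w * wordProd bs.flatten * wordProd r' := by
          rw [hfix bs (Subset.refl _)]
      _ = wordProd w := by
          conv_rhs => rw [hw']
          simp only [wordProd_append, hc₁, mul_assoc]
  subst hr'nil
  rw [append_nil] at hw'
  refine ⟨u₁, x₁, bs, hw', hu₁, fun b hb => ?_⟩
  obtain ⟨u, x, rfl, hub, hu⟩ := hbs b hb
  obtain ⟨A, B, rfl⟩ := append_of_mem hb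
  refine ⟨u₁ ++ [x₁] ++ A.flatten, u, x, rfl, ⟨B.flatten, by rw [hw']; simp⟩, ?_, hub, hu⟩
  rw [wordProd_append, hc₁, hfix A fun b hb => by simp [hb]]

theorem JSmooth.ncard_prefixProds_lt_of_block [Finite S] {w pre u : List S} {x : S}
    (hw : JSmooth w) (hne : w ≠ []) (hpre : pre ++ (u ++ [x]) <+: w)
    (hp : wordProd pre = wordProd w) (hfix : wordProd w * wordProd (u ++ [x]) = wordProd w)
    (hmin : ∀ π, π <+: u → π ≠ [] → wordProd w * wordProd π ≠ wordProd w) :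
    ∃ q, wordProd (u ++ [x]) = q * wordProd w ∧ (prefixProds u).ncard < (prefixProds w).ncard := by
  have hb : u ++ [x] <:+: w := (suffix_append pre _).isInfix.trans hpre.isInfix
  obtain ⟨q, hq⟩ := exists_eq_mul_of_jLe_mul_left (y := wordProd w)
    (by rw [hfix]; exact hw _ hb (by simp))
  rw [hfix] at hq
  have he : IsIdempotentElem (wordProd (u ++ [x])) := by
    rw [IsIdempotentElem]; nth_rewrite 1 [hq]; rw [mul_assoc, hfix, ← hq]
  have hpre' : pre ++ u <+: w := ((prefix_append_right_inj pre).2 (prefix_append u [x])).trans hpre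
  refine ⟨q, hq, ncard_prefixProds_lt hne hpre' q (by rwa [hp]) fun π hπ hπne => ?_⟩
  obtain ⟨rest, hrest⟩ := hπ.trans (prefix_append u [x])
  rw [hp, ← mul_assoc, ← hq]
  refine he.mul_eq_of_jLe (y := wordProd rest) (by rw [← wordProd_append, hrest]) ?_
  have hπw : π <:+: w := (hπ.trans (prefix_append u [x])).isInfix.trans hb
  exact (hw π hπw hπne).trans (hfix ▸ jLe_mul_left _ _)

end Smooth

section Main

variable {S : Type*} [Semigroup S]

open List

theorem factHeightLe_of_mul_eq [Finite S] (p : WithOne S) :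
    FactHeightLe (fun vs : List S => ∀ v ∈ vs, ∃ q, (v : WithOne S) = q * p ∧ p * v = p)
      (2 * Nat.card S) := by
  classical
  have := Fintype.ofFinite S
  let E : Finset S := {v | ∃ q, (v : WithOne S) = q * p ∧ p * v = p}
  have hE : ∀ v ∈ E, ∀ v' ∈ E, v * v' = v := by
    simp only [E, Finset.mem_filter, Finset.mem_univ, true_and]
    rintro v ⟨q, hq, -⟩ v' ⟨-, -, hv'⟩
    apply WithOne.coe_injective
    rw [WithOne.coe_mul, hq, mul_assoc, hv']
  refine (factHeightLe_of_leftZero E hE).mono (fun _ _ h v hv => by simpa [E] using h v hv) ?_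
  rw [Nat.card_eq_fintype_card]
  exact Nat.mul_le_mul_left 2 (Finset.card_le_univ E)

theorem factHeightLe_jSmooth [Finite S] (m : ℕ) :
    FactHeightLe (fun w : List S => JSmooth w ∧ (prefixProds w).ncard ≤ m)
      (m * (2 * Nat.card S + 2)) := by
  induction m with
  | zero =>
    rintro w hw ⟨-, hm⟩
    have := (Set.ncard_pos (Set.toFinite (prefixProds w))).2 ⟨_, w, prefix_refl w, hw, rfl⟩
    omega
  | succ m ih =>
    rintro w hw ⟨hsm, hm⟩
    set K := 2 * Nat.card S + 2
    have hblock : FactHeightLe (fun b => ∃ u x, b = u ++ [x] ∧ JSmooth u ∧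
        (prefixProds u).ncard ≤ m) (m * K + 1) :=
      (ih.append (FactHeightLe.singleton 0)).mono
        (by rintro _ - ⟨u, x, rfl, hu⟩; exact ⟨u, [x], rfl, hu, x, rfl⟩) (by omega)
    have htail := (hblock.mono (fun _ _ => And.left) le_rfl).flatten
      (factHeightLe_of_mul_eq (wordProd w))
      (P := fun b => (∃ u x, b = u ++ [x] ∧ JSmooth u ∧ (prefixProds u).ncard ≤ m) ∧
        ∃ q, wordProd b = q * wordProd w ∧ wordProd w * wordProd b = wordProd w)
      (by rintro b - ⟨-, q, hq, hfix⟩ v hv; rw [hv]; exact ⟨q, hq, hfix⟩)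
    obtain ⟨u₁, x₁, bs, hw', hu₁, hbs⟩ := exists_first_block_tail w hw
    have hpre₁ : u₁ ++ [x₁] <+: w := ⟨bs.flatten, hw'.symm⟩
    have hu₁w : u₁ <+: w := (prefix_append u₁ [x₁]).trans hpre₁
    have hfirst : JSmooth u₁ ∧ (prefixProds u₁).ncard ≤ m := by
      refine ⟨hsm.of_infix hu₁w.isInfix, Nat.lt_succ_iff.1 (hm.trans_lt' ?_)⟩
      exact ncard_prefixProds_lt hw (pre := []) hu₁w 1 (by simpa using hu₁) (by simp)
    have htail_blocks : ∀ b ∈ bs, b ≠ [] ∧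
        ((∃ u x, b = u ++ [x] ∧ JSmooth u ∧ (prefixProds u).ncard ≤ m) ∧
          ∃ q, wordProd b = q * wordProd w ∧ wordProd w * wordProd b = wordProd w) := by
      intro b hb
      obtain ⟨pre, u, x, rfl, hpre, hp, hfix, hu⟩ := hbs b hb
      obtain ⟨q, hq, hlt⟩ := hsm.ncard_prefixProds_lt_of_block hw hpre hp hfix hu
      have hu_infix : u <:+: w := (prefix_append u [x]).isInfix.trans
        ((suffix_append pre _).isInfix.trans hpre.isInfix)
      exact ⟨by simp, ⟨u, x, rfl, hsm.of_infix hu_infix, by omega⟩, q, hq, hfix⟩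
    refine ((hblock.append htail).mono (fun _ _ => id) ?_) w hw
      ⟨u₁ ++ [x₁], bs.flatten, hw', ⟨u₁, x₁, rfl, hfirst⟩, bs, rfl, htail_blocks⟩
    rw [Nat.add_mul]
    omega

theorem exists_factHeightLe_jSmooth [Finite S] : ∃ h, FactHeightLe (JSmooth : List S → Prop) h :=
  ⟨_, (factHeightLe_jSmooth (Nat.card (WithOne S))).mono
    (fun _ _ hw => ⟨hw, Set.ncard_le_card _⟩) le_rfl⟩

theorem exists_maximal_jLe [Finite S] [Nonempty S] :
    ∃ a : S, ∀ b : S, JLe (a : WithOne S) b → JLe (b : WithOne S) a := by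
  obtain ⟨a, ha⟩ := Finite.exists_min fun a : S => {y : WithOne S | JLe (a : WithOne S) y}.ncard
  refine ⟨a, fun b hab => ?_⟩
  have hsub : {y : WithOne S | JLe (b : WithOne S) y} ⊆ {y | JLe (a : WithOne S) y} :=
    fun y hy => hab.trans hy
  have hup := Set.eq_of_subset_of_ncard_le hsub (ha b)
  exact (hup ▸ JLe.refl _ : (a : WithOne S) ∈ {y : WithOne S | JLe (b : WithOne S) y})

theorem jSmooth_of_jLe {a : S} (ha : ∀ b : S, JLe (a : WithOne S) b → JLe (b : WithOne S) a)
    {w : List S} (hw : JLe (a : WithOne S) (wordProd w)) : JSmooth w := by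
  intro z hz hne
  obtain ⟨b, z', rfl⟩ := exists_cons_of_ne_nil hne
  have hzb : JLe (wordProd (b :: z')) b := by
    simpa using jLe_mul_right (b : WithOne S) (wordProd z')
  exact hzb.trans ((ha b ((hw.trans (jLe_wordProd_of_infix hz)).trans hzb)).trans hw)

def Subsemigroup.notJAbove (a : S) : Subsemigroup S where
  carrier := {x | ¬ JLe (a : WithOne S) x}
  mul_mem' {x y} hx _ hxy := hx (hxy.trans (by simpa using jLe_mul_right (x : WithOne S) y))

theorem FactHeightLe.of_jLe_maximal [Finite S] {a : S}
    (ha : ∀ b : S, JLe (a : WithOne S) b → JLe (b : WithOne S) a) {h : ℕ}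
    (hT : FactHeightLe (fun l : List S => ∀ x ∈ l, ¬ JLe (a : WithOne S) x) h) :
    ∃ h', FactHeightLe (fun _ : List S => True) h' := by
  obtain ⟨hJ, hsm⟩ := exists_factHeightLe_jSmooth (S := S)
  let G : List S → Prop := fun l => JLe (a : WithOne S) (wordProd l)
  have hG : FactHeightLe (fun l => l = [] ∨ G l) hJ :=
    hsm.mono (fun l hl hGl => jSmooth_of_jLe ha (hGl.resolve_left hl)) le_rfl
  have hchunks : FactHeightLe (fun c => (∃ b x, c = b ++ [x] ∧ (b = [] ∨ G b)) ∧ ¬ G c)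
      (max hJ 0 + 1) :=
    (hG.append (FactHeightLe.singleton 0)).mono
      (by rintro _ - ⟨⟨b, x, rfl, hb⟩, -⟩; exact ⟨b, [x], rfl, hb, x, rfl⟩) le_rfl
  refine ⟨_, ((hchunks.flatten hT ?_).append hG).mono (fun w _ _ => ?_) le_rfl⟩
  · rintro c - ⟨-, hc⟩ v hv
    rwa [hv]
  obtain ⟨cs, r, rfl, hcs, hr⟩ := exists_greedy_split G w
  refine ⟨cs.flatten, r, rfl, ⟨cs, rfl, fun c hc => ?_⟩, hr⟩
  obtain ⟨b, x, rfl, hb, hbx⟩ := hcs c hc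
  exact ⟨by simp, ⟨b, x, rfl, hb⟩, hbx⟩

theorem exists_factHeightLe (S : Type*) [Semigroup S] [Finite S] :
    ∃ h, FactHeightLe (fun _ : List S => True) h := by
  induction hn : Nat.card S using Nat.strong_induction_on generalizing S with
  | _ n ih =>
  rcases isEmpty_or_nonempty S with hS | hS
  · exact ⟨0, fun l hl => (IsEmpty.false (l.head hl)).elim⟩
  obtain ⟨a, ha⟩ := exists_maximal_jLe (S := S)
  obtain ⟨h, hT⟩ := ih _ (hn ▸ Finite.card_subtype_lt (x := a) fun h => h (JLe.refl _))
    (Subsemigroup.notJAbove a) rfl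
  exact FactHeightLe.of_jLe_maximal ha hT.of_subsemigroup

end Main

/-- Simon's factorization forest theorem: for every finite semigroup `S` there is a bound
`h` such that every nonempty sequence over `S` admits a factorization tree of height at
most `h` in which every internal node is binary or idempotent. -/
theorem stmt_15 {S : Type*} [Semigroup S] [Finite S] :
    ∃ h : ℕ, ∀ l : List S, l ≠ [] → ∃ v : S, FactTreeLe l v h := by
  obtain ⟨h, hS⟩ := exists_factHeightLe S
  exact ⟨h, fun l hl => hS l hl trivial⟩
end

section
/- Let X be a set with atoms, x ∈ X, and α a finite set of atoms. If the α-orbit of x, namely {π(x) : π a permutation fixing α pointwise}, is finite, then α supports x, i.e., π(x) = x for every permutation π fixing α pointwise. Consequently, if a finite subset F ⊆ X is supported by α (setwise), then every element of F is supported by α. -/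
/-- If the `α`-orbit of `x` is finite, then `α` supports `x`.  Consequently, every element
of a finite subset `F ⊆ X` that is supported by `α` setwise is itself supported by `α`. -/
theorem stmt_19 {X : Type*} [MulAction (Equiv.Perm ℕ) X]
    (supp : X → Finset ℕ)
    (hsupp : ∀ x : X, ∀ π : Equiv.Perm ℕ, (∀ a ∈ supp x, π a = a) → π • x = x)
    (hleast : ∀ (x : X) (β : Finset ℕ),
      (∀ π : Equiv.Perm ℕ, (∀ a ∈ β, π a = a) → π • x = x) → supp x ⊆ β)
    (hequiv : ∀ (x : X) (π : Equiv.Perm ℕ), supp (π • x) = (supp x).image π) :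
    (∀ (x : X) (α : Finset ℕ),
      {y : X | ∃ π : Equiv.Perm ℕ, (∀ a ∈ α, π a = a) ∧ π • x = y}.Finite →
      ∀ π : Equiv.Perm ℕ, (∀ a ∈ α, π a = a) → π • x = x) ∧
    (∀ (F : Set X) (α : Finset ℕ), F.Finite →
      (∀ π : Equiv.Perm ℕ, (∀ a ∈ α, π a = a) → (fun y : X => π • y) '' F = F) →
      ∀ x ∈ F, ∀ π : Equiv.Perm ℕ, (∀ a ∈ α, π a = a) → π • x = x) := by
  have main : ∀ (x : X) (α : Finset ℕ),
      {y : X | ∃ π : Equiv.Perm ℕ, (∀ a ∈ α, π a = a) ∧ π • x = y}.Finite →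
      ∀ π : Equiv.Perm ℕ, (∀ a ∈ α, π a = a) → π • x = x := by
    intro x α hfin π hπ
    -- It suffices to show supp x ⊆ α
    have hsub : (supp x : Set ℕ) ⊆ (α : Set ℕ) := by
      intro b hb
      by_contra hbα
      have hb' : b ∈ supp x := hb
      -- fresh atoms
      set S : Set ℕ := ((supp x ∪ α : Finset ℕ) : Set ℕ)ᶜ with hS
      have hSinf : S.Infinite := (Finset.finite_toSet _).infinite_compl
      set f : ℕ → X := fun c => Equiv.swap b c • x with hf
      have hmem : ∀ c ∈ S, f c ∈ {y : X | ∃ π : Equiv.Perm ℕ, (∀ a ∈ α, π a = a) ∧ π • x = y} := by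
        intro c hc
        refine ⟨Equiv.swap b c, ?_, rfl⟩
        intro a ha
        apply Equiv.swap_apply_of_ne_of_ne
        · rintro rfl; exact hbα ha
        · rintro rfl
          exact hc (by simp [Finset.mem_union]; exact Or.inr ha)
      have hinj : Set.InjOn f S := by
        intro c hc c' hc' hcc
        by_contra hne
        have hcx : c ∉ supp x := fun h => hc (by simp [Finset.mem_union, h])
        have hc'x : c' ∉ supp x := fun h => hc' (by simp [Finset.mem_union, h])
        have hsupps : (supp x).image (Equiv.swap b c) = (supp x).image (Equiv.swap b c') := by
          rw [← hequiv, ← hequiv]; exact congrArg supp hcc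
        have hcin : c ∈ (supp x).image (Equiv.swap b c) :=
          Finset.mem_image.mpr ⟨b, hb', Equiv.swap_apply_left _ _⟩
        rw [hsupps] at hcin
        obtain ⟨a, haS, ha⟩ := Finset.mem_image.mp hcin
        rcases eq_or_ne a b with rfl | hab
        · rw [Equiv.swap_apply_left] at ha; exact hne ha.symm
        · have hac' : a ≠ c' := fun h => hc'x (h ▸ haS)
          rw [Equiv.swap_apply_of_ne_of_ne hab hac'] at ha
          exact hcx (ha ▸ haS)
      have : (f '' S).Infinite := hSinf.image hinj
      exact this (hfin.subset (Set.image_subset_iff.mpr hmem))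
    apply hsupp
    intro a ha
    exact hπ a (hsub ha)
  refine ⟨main, ?_⟩
  intro F α hF hset x hx π hπ
  apply main x α _ π hπ
  apply hF.subset
  rintro y ⟨σ, hσ, rfl⟩
  rw [← hset σ hσ]
  exact ⟨x, hx, rfl⟩
end
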